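/- arXiv:1104.0764 — 3 statements merged into one kernel-verified Lean document; each statement's English description precedes it below -/
import Mathlib

section
/- Let θ > 0, ρ ≤ 0, and let b(x) → 0 with |b| regularly varying at infinity with index ρ. Suppose k_n → ∞, log(k_n)/log(n) → 0, k_n^{1/2}·b(log(n/k_n)) → λ ∈ ℝ, and b is ultimately non-negative. Define β = 2·lim_{x→∞} x·b(x) ∈ [0,+∞] (assumed to exist). If β > θ, then for all n large enough AMSE(θ̂_n^{(3)}) < AMSE(θ̂_n^{(1)}) < AMSE(θ̂_n^{(2)}). -/
/-!
Write `t = log (n / k n)`. The bias terms are then explicit: `a1 = 0`; `a3 = t μ₀(t) - 1` lies in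
`[-1/t, 0)` because `x/t - x²/(2t²) ≤ log (1 + x/t) < x/t`; and `a2 > 0` because the substitution
`y = e^{-x}` turns `μ₀(t)` into `∫₀¹ log (1 - log y / t) dy`, and the integrand is strictly
decreasing, so its right Riemann sum `T2` is smaller than the integral. Since eventually `b ≥ 0`
and `2 t b(t) > θ` (as `β > θ`), expanding the squares `(θ aᵢ + b)²` orders the three AMSEs.
-/

open MeasureTheory ProbabilityTheory Filter Real Topology

noncomputable section

/-- `K_ρ(λ) = ∫_1^λ u^(ρ-1) du`. -/
def Krho (ρ lam : ℝ) : ℝ := ∫ u in (1:ℝ)..lam, u ^ (ρ - 1)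

/-- `μ_ρ(t) = ∫_0^∞ K_ρ(1 + x/t) e^(-x) dx`. -/
def muRho (ρ t : ℝ) : ℝ := ∫ x in Set.Ioi (0:ℝ), Krho ρ (1 + x / t) * Real.exp (-x)

/-- `σ_ρ²(t) = ∫_0^∞ K_ρ²(1 + x/t) e^(-x) dx - μ_ρ²(t)`. -/
def sigmaRhoSq (ρ t : ℝ) : ℝ :=
  (∫ x in Set.Ioi (0:ℝ), (Krho ρ (1 + x / t)) ^ 2 * Real.exp (-x)) - (muRho ρ t) ^ 2

/-- A function is slowly varying at infinity. -/
def SlowlyVarying (l : ℝ → ℝ) : Prop :=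
  ∀ c > (0:ℝ), Tendsto (fun x => l (c * x) / l x) atTop (𝓝 1)

/-- A function is regularly varying at infinity with index `ρ`. -/
def RegularlyVarying (g : ℝ → ℝ) (ρ : ℝ) : Prop :=
  ∀ c > (0:ℝ), Tendsto (fun x => g (c * x) / g x) atTop (𝓝 (c ^ ρ))

/-- Convergence in distribution of a sequence of real random variables towards the
law `μlim`, expressed through convergence of integrals of bounded continuous functions. -/
def TendstoInDistribution {Ω : Type*} [MeasurableSpace Ω] (P : Measure Ω)
    (Z : ℕ → Ω → ℝ) (μlim : Measure ℝ) : Prop :=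
  ∀ f : BoundedContinuousFunction ℝ ℝ,
    Tendsto (fun n => ∫ ω, f (Z n ω) ∂P) atTop (𝓝 (∫ x, f x ∂μlim))

/-- Convergence to `0` in probability (`o_P(1)`). -/
def TendstoInProbabilityZero {Ω : Type*} [MeasurableSpace Ω] (P : Measure Ω)
    (Z : ℕ → Ω → ℝ) : Prop :=
  ∀ δ > (0:ℝ), Tendsto (fun n => P {ω | δ ≤ |Z n ω|}) atTop (𝓝 0)

open Set

lemma sub_sq_div_two_le_log_one_add {u : ℝ} (hu : 0 ≤ u) : u - u ^ 2 / 2 ≤ log (1 + u) := by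
  have h1u : (1 : ℝ) ≤ 1 + u := by linarith
  have hinv : ContinuousOn (fun x : ℝ => x⁻¹) (uIcc 1 (1 + u)) :=
    continuousOn_inv₀.mono fun x hx => by
      rw [uIcc_of_le h1u] at hx; exact (zero_lt_one.trans_le hx.1).ne'
  have hline : IntervalIntegrable (fun x : ℝ => 2 - x) volume 1 (1 + u) :=
    intervalIntegrable_const.sub intervalIntegral.intervalIntegrable_id
  -- `2 - x` is the tangent line of the convex function `1 / x` at `x = 1`
  have hmono : ∫ x in (1 : ℝ)..1 + u, (2 - x) ≤ ∫ x in (1 : ℝ)..1 + u, x⁻¹ :=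
    intervalIntegral.integral_mono_on h1u hline hinv.intervalIntegrable fun x hx => by
      rw [← one_div, le_div_iff₀ (zero_lt_one.trans_le hx.1)]
      nlinarith [sq_nonneg (x - 1)]
  rw [integral_inv_of_pos one_pos (by linarith), div_one, intervalIntegral.integral_sub
    intervalIntegrable_const intervalIntegral.intervalIntegrable_id, integral_id,
    intervalIntegral.integral_const, smul_eq_mul] at hmono
  linarith

lemma Krho_zero_eq_log {l : ℝ} (hl : 0 < l) : Krho 0 l = log l := by
  simp only [Krho, zero_sub, Real.rpow_neg_one]
  rw [integral_inv_of_pos one_pos hl, div_one]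

lemma integrableOn_pow_mul_exp_neg_Ioi (n : ℕ) :
    IntegrableOn (fun x : ℝ => x ^ n * exp (-x)) (Ioi 0) := by
  refine (Real.GammaIntegral_convergent (s := n + 1) (by positivity)).congr_fun
    (fun x _ => ?_) measurableSet_Ioi
  simp [mul_comm]

lemma integral_pow_mul_exp_neg_Ioi (n : ℕ) :
    ∫ x in Ioi (0 : ℝ), x ^ n * exp (-x) = n.factorial := by
  rw [← Real.Gamma_nat_eq_factorial, Real.Gamma_eq_integral (by positivity)]
  refine setIntegral_congr_fun measurableSet_Ioi fun x _ => ?_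
  simp [mul_comm]

lemma setIntegral_pos_of_pos {X : Type*} [MeasurableSpace X] {μ : Measure X} {s : Set X}
    {f : X → ℝ} (hs : MeasurableSet s) (hμs : 0 < μ s) (hf : IntegrableOn f s μ)
    (hpos : ∀ x ∈ s, 0 < f x) : 0 < ∫ x in s, f x ∂μ := by
  rw [setIntegral_pos_iff_support_of_nonneg_ae
    (ae_restrict_of_forall_mem hs fun x hx => (hpos x hx).le) hf]
  exact hμs.trans_le (measure_mono fun x hx => ⟨(hpos x hx).ne', hx⟩)

lemma muRho_zero_eq_integral_log {t : ℝ} (ht : 0 < t) :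
    muRho 0 t = ∫ x in Ioi (0 : ℝ), log (1 + x / t) * exp (-x) :=
  setIntegral_congr_fun measurableSet_Ioi fun x (hx : 0 < x) => by
    rw [Krho_zero_eq_log (by positivity)]

lemma integrableOn_div_mul_exp_neg_Ioi (t : ℝ) :
    IntegrableOn (fun x : ℝ => x / t * exp (-x)) (Ioi 0) :=
  IntegrableOn.congr_fun ((integrableOn_pow_mul_exp_neg_Ioi 1).const_mul t⁻¹)
    (fun x _ => by ring) measurableSet_Ioi

lemma integral_div_mul_exp_neg_Ioi (t : ℝ) :
    ∫ x in Ioi (0 : ℝ), x / t * exp (-x) = t⁻¹ := by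
  simpa [div_eq_inv_mul, mul_assoc, integral_const_mul] using
    congrArg (t⁻¹ * ·) (integral_pow_mul_exp_neg_Ioi 1)

lemma integrableOn_log_one_add_div_mul_exp_neg_Ioi {t : ℝ} (ht : 0 < t) :
    IntegrableOn (fun x : ℝ => log (1 + x / t) * exp (-x)) (Ioi 0) := by
  refine (integrableOn_div_mul_exp_neg_Ioi t).mono' (by fun_prop) ?_
  filter_upwards [ae_restrict_mem measurableSet_Ioi] with x (hx : 0 < x)
  have hxt : 0 < x / t := by positivity
  rw [norm_mul, Real.norm_of_nonneg (Real.log_nonneg (by linarith)), Real.norm_of_nonneg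
    (Real.exp_pos _).le]
  gcongr
  linarith [Real.log_le_sub_one_of_pos (show 0 < 1 + x / t by linarith)]

lemma muRho_zero_lt_inv {t : ℝ} (ht : 0 < t) : muRho 0 t < t⁻¹ := by
  have hint := integrableOn_log_one_add_div_mul_exp_neg_Ioi ht
  have hgap : 0 < ∫ x in Ioi (0 : ℝ), (x / t * exp (-x) - log (1 + x / t) * exp (-x)) := by
    refine setIntegral_pos_of_pos measurableSet_Ioi (by simp)
      ((integrableOn_div_mul_exp_neg_Ioi t).sub hint) fun x (hx : 0 < x) => ?_
    have hxt : 0 < x / t := by positivity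
    have hlog := Real.log_lt_sub_one_of_pos (show 0 < 1 + x / t by linarith) (by linarith)
    rw [← sub_mul]
    exact mul_pos (by linarith) (Real.exp_pos _)
  rw [integral_sub (integrableOn_div_mul_exp_neg_Ioi t) hint, integral_div_mul_exp_neg_Ioi,
    ← muRho_zero_eq_integral_log ht] at hgap
  linarith

lemma inv_sub_inv_sq_le_muRho_zero {t : ℝ} (ht : 0 < t) : t⁻¹ - (t ^ 2)⁻¹ ≤ muRho 0 t := by
  have hquad : ∀ x : ℝ, (x / t - x ^ 2 / (2 * t ^ 2)) * exp (-x) =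
      t⁻¹ * (x ^ 1 * exp (-x)) - (2 * t ^ 2)⁻¹ * (x ^ 2 * exp (-x)) := fun x => by ring
  have hint1 := (integrableOn_pow_mul_exp_neg_Ioi 1).const_mul t⁻¹
  have hint2 := (integrableOn_pow_mul_exp_neg_Ioi 2).const_mul (2 * t ^ 2)⁻¹
  have hint : IntegrableOn (fun x => (x / t - x ^ 2 / (2 * t ^ 2)) * exp (-x)) (Ioi 0) :=
    IntegrableOn.congr_fun (hint1.sub hint2) (fun x _ => (hquad x).symm) measurableSet_Ioi
  have hle : ∫ x in Ioi (0 : ℝ), (x / t - x ^ 2 / (2 * t ^ 2)) * exp (-x) ≤ muRho 0 t := by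
    rw [muRho_zero_eq_integral_log ht]
    refine setIntegral_mono_on hint (integrableOn_log_one_add_div_mul_exp_neg_Ioi ht)
      measurableSet_Ioi fun x (hx : 0 < x) => ?_
    have h := sub_sq_div_two_le_log_one_add (show 0 ≤ x / t by positivity)
    rw [div_pow, div_div, mul_comm _ (2 : ℝ)] at h
    gcongr
  simp only [hquad] at hle
  rw [integral_sub hint1 hint2, integral_const_mul, integral_const_mul,
    integral_pow_mul_exp_neg_Ioi, integral_pow_mul_exp_neg_Ioi] at hle
  convert hle using 1
  simp only [Nat.factorial]
  field_simp
  ring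

section ExpNegSubstitution

lemma image_exp_neg_Ioi_zero : (fun x : ℝ => exp (-x)) '' Ioi 0 = Ioo 0 1 := by
  ext y
  constructor
  · rintro ⟨x, hx, rfl⟩
    exact ⟨Real.exp_pos _, Real.exp_lt_one_iff.mpr (neg_lt_zero.mpr hx)⟩
  · rintro ⟨hy0, hy1⟩
    exact ⟨-log y, neg_pos.mpr (Real.log_neg hy0 hy1), by simp [Real.exp_log hy0]⟩

lemma injOn_exp_neg : InjOn (fun x : ℝ => exp (-x)) (Ioi 0) :=
  fun _ _ _ _ h => neg_injective (Real.exp_injective h)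

lemma hasDerivWithinAt_exp_neg (s : Set ℝ) (x : ℝ) :
    HasDerivWithinAt (fun x : ℝ => exp (-x)) (-exp (-x)) s x := by
  simpa using (hasDerivAt_neg x).exp.hasDerivWithinAt

lemma abs_deriv_exp_neg_smul (g : ℝ → ℝ) (x : ℝ) :
    |-exp (-x)| • g (exp (-x)) = g (exp (-x)) * exp (-x) := by
  rw [abs_neg, abs_of_pos (Real.exp_pos _), smul_eq_mul, mul_comm]

variable (g : ℝ → ℝ)

lemma intervalIntegrable_zero_one_iff_integrableOn_comp_exp_neg :
    IntervalIntegrable g volume 0 1 ↔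
      IntegrableOn (fun x => g (exp (-x)) * exp (-x)) (Ioi 0) := by
  rw [intervalIntegrable_iff_integrableOn_Ioo_of_le zero_le_one, ← image_exp_neg_Ioi_zero,
    integrableOn_image_iff_integrableOn_abs_deriv_smul measurableSet_Ioi
      (fun x _ => hasDerivWithinAt_exp_neg _ x) injOn_exp_neg]
  simp only [abs_deriv_exp_neg_smul]

lemma intervalIntegral_zero_one_eq_integral_comp_exp_neg :
    ∫ y in (0 : ℝ)..1, g y = ∫ x in Ioi 0, g (exp (-x)) * exp (-x) := by
  rw [intervalIntegral.integral_of_le zero_le_one, integral_Ioc_eq_integral_Ioo,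
    ← image_exp_neg_Ioi_zero, integral_image_eq_integral_abs_deriv_smul measurableSet_Ioi
      (fun x _ => hasDerivWithinAt_exp_neg _ x) injOn_exp_neg]
  simp only [abs_deriv_exp_neg_smul]

end ExpNegSubstitution

lemma log_one_sub_log_exp_neg_div (t x : ℝ) :
    log (1 - log (exp (-x)) / t) = log (1 + x / t) := by
  rw [Real.log_exp, neg_div, sub_neg_eq_add]

lemma intervalIntegrable_log_one_sub_log_div {t : ℝ} (ht : 0 < t) :
    IntervalIntegrable (fun y => log (1 - log y / t)) volume 0 1 := by
  rw [intervalIntegrable_zero_one_iff_integrableOn_comp_exp_neg]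
  simpa only [log_one_sub_log_exp_neg_div] using integrableOn_log_one_add_div_mul_exp_neg_Ioi ht

lemma muRho_zero_eq_intervalIntegral {t : ℝ} (ht : 0 < t) :
    muRho 0 t = ∫ y in (0 : ℝ)..1, log (1 - log y / t) := by
  rw [intervalIntegral_zero_one_eq_integral_comp_exp_neg, muRho_zero_eq_integral_log ht]
  simp only [log_one_sub_log_exp_neg_div]

lemma strictAntiOn_log_one_sub_log_div {t : ℝ} (ht : 0 < t) :
    StrictAntiOn (fun y => log (1 - log y / t)) (Ioc 0 1) := by
  intro y hy z hz hyz
  have hlog := Real.log_lt_log hy.1 hyz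
  have hz0 : log z / t ≤ 0 := div_nonpos_of_nonpos_of_nonneg (Real.log_nonpos hz.1.le hz.2) ht.le
  exact Real.log_lt_log (by linarith) (by linarith [div_lt_div_of_pos_right hlog ht])

lemma log_one_sub_log_div_pos {t y : ℝ} (ht : 0 < t) (hy : y ∈ Ioo 0 1) :
    0 < log (1 - log y / t) :=
  Real.log_pos (by linarith [div_neg_of_neg_of_pos (Real.log_neg hy.1 hy.2) ht])

def rightRiemannSum (f : ℝ → ℝ) (K : ℕ) : ℝ :=
  (1 / (K : ℝ)) * ∑ i ∈ Finset.Icc 1 K, f ((i : ℝ) / (K : ℝ))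

lemma rightRiemannSum_eq_sum_range (f : ℝ → ℝ) (K : ℕ) :
    rightRiemannSum f K = ∑ i ∈ Finset.range K, (1 / (K : ℝ)) * f ((i + 1 : ℕ) / K) := by
  rw [rightRiemannSum, Finset.mul_sum, Finset.range_eq_Ico,
    Finset.sum_Ico_add' (fun i : ℕ => (1 / (K : ℝ)) * f (i / K)), zero_add,
    Finset.Ico_add_one_right_eq_Icc]

lemma sub_mul_lt_intervalIntegral_of_strictAntiOn {f : ℝ → ℝ} {a b : ℝ} (hab : a < b)
    (hf : StrictAntiOn f (Ioc a b)) (hint : IntervalIntegrable f volume a b) :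
    (b - a) * f b < ∫ x in a..b, f x := by
  have hgap : 0 < ∫ x in a..b, (f x - f b) :=
    intervalIntegral.intervalIntegral_pos_of_pos_on (hint.sub intervalIntegrable_const)
      (fun x hx => sub_pos.mpr (hf ⟨hx.1, hx.2.le⟩ ⟨hab, le_rfl⟩ hx.2)) hab
  rw [intervalIntegral.integral_sub hint intervalIntegrable_const,
    intervalIntegral.integral_const, smul_eq_mul] at hgap
  linarith

lemma rightRiemannSum_lt_intervalIntegral_of_strictAntiOn {f : ℝ → ℝ}
    (hf : StrictAntiOn f (Ioc 0 1)) (hint : IntervalIntegrable f volume 0 1) {K : ℕ}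
    (hK : 0 < K) : rightRiemannSum f K < ∫ x in (0 : ℝ)..1, f x := by
  set a : ℕ → ℝ := fun i => i / K
  have hK' : (0 : ℝ) < K := by exact_mod_cast hK
  have ha : ∀ i, a i < a (i + 1) := fun i => by
    simp only [a]; gcongr; exact_mod_cast i.lt_succ_self
  have hsub : ∀ i < K, Ioc (a i) (a (i + 1)) ⊆ Ioc 0 1 := fun i hi x hx =>
    ⟨lt_of_le_of_lt (by positivity) hx.1, hx.2.trans ((div_le_one hK').mpr (by exact_mod_cast hi))⟩
  have hinti : ∀ i < K, IntervalIntegrable f volume (a i) (a (i + 1)) := fun i hi =>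
    (intervalIntegrable_iff_integrableOn_Ioc_of_le (ha i).le).mpr
      (((intervalIntegrable_iff_integrableOn_Ioc_of_le zero_le_one).mp hint).mono_set (hsub i hi))
  have hsplit : ∫ x in (0 : ℝ)..1, f x = ∑ i ∈ Finset.range K, ∫ x in a i..a (i + 1), f x := by
    rw [intervalIntegral.sum_integral_adjacent_intervals hinti]
    simp [a, hK'.ne']
  rw [hsplit, rightRiemannSum_eq_sum_range]
  refine Finset.sum_lt_sum_of_nonempty (Finset.nonempty_range_iff.mpr hK.ne') fun i hi => ?_
  have hwidth : a (i + 1) - a i = 1 / K := by simp only [a]; push_cast; ring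
  rw [← hwidth]
  exact sub_mul_lt_intervalIntegral_of_strictAntiOn (ha i)
    (hf.mono (hsub i (Finset.mem_range.mp hi))) (hinti i (Finset.mem_range.mp hi))

lemma rightRiemannSum_pos {f : ℝ → ℝ} (hf : ∀ y ∈ Ioo (0 : ℝ) 1, 0 < f y) (hf1 : 0 ≤ f 1)
    {K : ℕ} (hK : 2 ≤ K) : 0 < rightRiemannSum f K := by
  have hK' : (1 : ℝ) < K := by exact_mod_cast hK
  refine mul_pos (by positivity) (Finset.sum_pos' (fun i hi => ?_) ⟨1, ?_, ?_⟩)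
  · obtain ⟨hi1, hiK⟩ := Finset.mem_Icc.mp hi
    rcases (Nat.cast_le.mpr hiK : (i : ℝ) ≤ K).lt_or_eq with hlt | heq
    · exact (hf _ ⟨by positivity, (div_lt_one (by positivity)).mpr hlt⟩).le
    · rwa [heq, div_self (by positivity)]
  · exact Finset.mem_Icc.mpr ⟨le_rfl, by omega⟩
  · exact hf _ ⟨by positivity, (div_lt_one (by positivity)).mpr (by simpa using hK')⟩

lemma muRho_zero_pos {t : ℝ} (ht : 1 < t) : 0 < muRho 0 t := by
  have hsq : (t ^ 2)⁻¹ < t⁻¹ := inv_strictAnti₀ (by positivity) (by nlinarith)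
  linarith [inv_sub_inv_sq_le_muRho_zero (zero_lt_one.trans ht)]

lemma muRho_zero_div_one_div_sub_one_neg {t : ℝ} (ht : 0 < t) :
    muRho 0 t / (1 / t) - 1 < 0 := by
  have h := mul_lt_mul_of_pos_right (muRho_zero_lt_inv ht) ht
  rw [inv_mul_cancel₀ ht.ne'] at h
  rw [div_div_eq_mul_div, div_one]
  linarith

lemma neg_inv_le_muRho_zero_div_one_div_sub_one {t : ℝ} (ht : 0 < t) :
    -t⁻¹ ≤ muRho 0 t / (1 / t) - 1 := by
  have h := mul_le_mul_of_nonneg_right (inv_sub_inv_sq_le_muRho_zero ht) ht.le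
  rw [div_div_eq_mul_div, div_one]
  have hlhs : (t⁻¹ - (t ^ 2)⁻¹) * t - 1 = -t⁻¹ := by field_simp; ring
  linarith

lemma muRho_zero_div_rightRiemannSum_sub_one_pos {t : ℝ} (ht : 0 < t) {K : ℕ} (hK : 2 ≤ K) :
    0 < muRho 0 t / rightRiemannSum (fun y => log (1 - log y / t)) K - 1 := by
  have hpos : 0 < rightRiemannSum (fun y => log (1 - log y / t)) K :=
    rightRiemannSum_pos (fun y hy => log_one_sub_log_div_pos ht hy) (by simp) hK
  rw [sub_pos, one_lt_div hpos, muRho_zero_eq_intervalIntegral ht]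
  exact rightRiemannSum_lt_intervalIntegral_of_strictAntiOn
    (strictAntiOn_log_one_sub_log_div ht) (intervalIntegrable_log_one_sub_log_div ht) (by omega)

lemma tendsto_log_div_atTop {α : Type*} {l : Filter α} {u v : α → ℝ}
    (hu : Tendsto u l atTop) (hv : ∀ᶠ a in l, 0 < v a)
    (h : Tendsto (fun a => log (v a) / log (u a)) l (𝓝 0)) :
    Tendsto (fun a => log (u a / v a)) l atTop := by
  have hlogu := Real.tendsto_log_atTop.comp hu
  refine (hlogu.atTop_mul_pos (by norm_num : (0 : ℝ) < 1 - 0)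
    (tendsto_const_nhds.sub h)).congr' ?_
  filter_upwards [hv, hu.eventually_gt_atTop 1] with a hva hua
  have hlogu_ne : log (u a) ≠ 0 := (Real.log_pos hua).ne'
  rw [Function.comp_apply, Real.log_div (by linarith) hva.ne', mul_sub, mul_one,
    mul_div_cancel₀ _ hlogu_ne]

lemma sq_add_lt_sq_of_neg {x b : ℝ} (hx : x < 0) (hxb : -x < 2 * b) : (x + b) ^ 2 < b ^ 2 := by
  nlinarith

lemma sq_lt_sq_add_of_pos {x b : ℝ} (hx : 0 < x) (hb : 0 ≤ b) : b ^ 2 < (x + b) ^ 2 := by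
  nlinarith

theorem amse_comparison_positive_bias_large_beta_general
    (θ : ℝ) (hθpos : 0 < θ)
    (b : ℝ → ℝ)
    (k : ℕ → ℕ)
    (hk : Tendsto (fun n => (k n : ℝ)) atTop atTop)
    (hC2 : Tendsto (fun n : ℕ => Real.log (k n) / Real.log n) atTop (𝓝 0))
    -- the three normalizing sequences and the associated bias terms
    (T1 T2 T3 a1 a2 a3 : ℕ → ℝ)
    (hT1 : ∀ n, T1 n = muRho 0 (Real.log ((n : ℝ) / (k n : ℝ))))
    (hT2 : ∀ n, T2 n = (1 / (k n : ℝ)) * ∑ i ∈ Finset.Icc 1 (k n),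
      Real.log (1 - Real.log ((i : ℝ) / (k n : ℝ)) / Real.log ((n : ℝ) / (k n : ℝ))))
    (hT3 : ∀ n, T3 n = 1 / Real.log ((n : ℝ) / (k n : ℝ)))
    (ha1 : ∀ n, a1 n = muRho 0 (Real.log ((n : ℝ) / (k n : ℝ))) / T1 n - 1)
    (ha2 : ∀ n, a2 n = muRho 0 (Real.log ((n : ℝ) / (k n : ℝ))) / T2 n - 1)
    (ha3 : ∀ n, a3 n = muRho 0 (Real.log ((n : ℝ) / (k n : ℝ))) / T3 n - 1)
    -- the asymptotic mean square errors of the three estimators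
    (AMSE1 AMSE2 AMSE3 : ℕ → ℝ)
    (hAMSE1 : ∀ n, AMSE1 n =
      (θ * a1 n + b (Real.log ((n : ℝ) / (k n : ℝ)))) ^ 2 + θ ^ 2 / (k n : ℝ))
    (hAMSE2 : ∀ n, AMSE2 n =
      (θ * a2 n + b (Real.log ((n : ℝ) / (k n : ℝ)))) ^ 2 + θ ^ 2 / (k n : ℝ))
    (hAMSE3 : ∀ n, AMSE3 n =
      (θ * a3 n + b (Real.log ((n : ℝ) / (k n : ℝ)))) ^ 2 + θ ^ 2 / (k n : ℝ))
    (hbpos : ∀ᶠ x in atTop, 0 ≤ b x)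
    (β : EReal)
    (hβ : Tendsto (fun x : ℝ => ((2 * x * b x : ℝ) : EReal)) atTop (𝓝 β))
    (hβθ : (θ : EReal) < β) :
    ∀ᶠ n in atTop, AMSE3 n < AMSE1 n ∧ AMSE1 n < AMSE2 n := by
  have ht : Tendsto (fun n : ℕ => log ((n : ℝ) / (k n : ℝ))) atTop atTop :=
    tendsto_log_div_atTop tendsto_natCast_atTop_atTop (hk.eventually_gt_atTop 0) hC2
  have hθb : ∀ᶠ x : ℝ in atTop, θ < 2 * x * b x :=
    (hβ.eventually (lt_mem_nhds hβθ)).mono fun x hx => by exact_mod_cast hx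
  filter_upwards [hk.eventually_ge_atTop 2, ht.eventually_gt_atTop 1, ht.eventually hbpos,
    ht.eventually hθb] with n hK ht1 hbn hθbn
  set t := log ((n : ℝ) / (k n : ℝ))
  have ht0 : 0 < t := zero_lt_one.trans ht1
  have ha1n : a1 n = 0 := by rw [ha1, hT1, div_self (muRho_zero_pos ht1).ne', sub_self]
  have ha2n : 0 < a2 n := by
    rw [ha2, hT2]
    exact muRho_zero_div_rightRiemannSum_sub_one_pos ht0 (by exact_mod_cast hK)
  have ha3n : a3 n < 0 := by rw [ha3, hT3]; exact muRho_zero_div_one_div_sub_one_neg ht0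
  have hθa3n : -(θ * a3 n) < 2 * b t := by
    have hlow := mul_le_mul_of_nonneg_left (neg_inv_le_muRho_zero_div_one_div_sub_one ht0)
      hθpos.le
    have hθt : θ * t⁻¹ < 2 * b t := by
      rw [← div_eq_mul_inv, div_lt_iff₀ ht0]; linarith
    rw [ha3, hT3]; linarith
  rw [hAMSE1, hAMSE2, hAMSE3, ha1n, mul_zero, zero_add]
  exact ⟨add_lt_add_left (sq_add_lt_sq_of_neg (mul_neg_of_pos_of_neg hθpos ha3n) hθa3n) _,
    add_lt_add_left (sq_lt_sq_add_of_pos (mul_pos hθpos ha2n) hbn) _⟩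

theorem amse_comparison_positive_bias_large_beta
    (θ ρ : ℝ) (hθpos : 0 < θ) (hρ : ρ ≤ 0)
    (b : ℝ → ℝ) (hb0 : Tendsto b atTop (𝓝 0))
    (hRV : RegularlyVarying (fun x => |b x|) ρ)
    (k : ℕ → ℕ) (hkbd : ∀ n, 2 ≤ n → 1 ≤ k n ∧ k n < n)
    (hk : Tendsto (fun n => (k n : ℝ)) atTop atTop)
    (hC2 : Tendsto (fun n : ℕ => Real.log (k n) / Real.log n) atTop (𝓝 0))
    (lam : ℝ)
    (hlam : Tendsto (fun n => Real.sqrt (k n) * b (Real.log ((n : ℝ) / (k n : ℝ))))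
      atTop (𝓝 lam))
    -- the three normalizing sequences and the associated bias terms
    (T1 T2 T3 a1 a2 a3 : ℕ → ℝ)
    (hT1 : ∀ n, T1 n = muRho 0 (Real.log ((n : ℝ) / (k n : ℝ))))
    (hT2 : ∀ n, T2 n = (1 / (k n : ℝ)) * ∑ i ∈ Finset.Icc 1 (k n),
      Real.log (1 - Real.log ((i : ℝ) / (k n : ℝ)) / Real.log ((n : ℝ) / (k n : ℝ))))
    (hT3 : ∀ n, T3 n = 1 / Real.log ((n : ℝ) / (k n : ℝ)))
    (ha1 : ∀ n, a1 n = muRho 0 (Real.log ((n : ℝ) / (k n : ℝ))) / T1 n - 1)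
    (ha2 : ∀ n, a2 n = muRho 0 (Real.log ((n : ℝ) / (k n : ℝ))) / T2 n - 1)
    (ha3 : ∀ n, a3 n = muRho 0 (Real.log ((n : ℝ) / (k n : ℝ))) / T3 n - 1)
    -- the asymptotic mean square errors of the three estimators
    (AMSE1 AMSE2 AMSE3 : ℕ → ℝ)
    (hAMSE1 : ∀ n, AMSE1 n =
      (θ * a1 n + b (Real.log ((n : ℝ) / (k n : ℝ)))) ^ 2 + θ ^ 2 / (k n : ℝ))
    (hAMSE2 : ∀ n, AMSE2 n =
      (θ * a2 n + b (Real.log ((n : ℝ) / (k n : ℝ)))) ^ 2 + θ ^ 2 / (k n : ℝ))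
    (hAMSE3 : ∀ n, AMSE3 n =
      (θ * a3 n + b (Real.log ((n : ℝ) / (k n : ℝ)))) ^ 2 + θ ^ 2 / (k n : ℝ))
    (hbpos : ∀ᶠ x in atTop, 0 ≤ b x)
    (β : EReal) (hβ0 : 0 ≤ β)
    (hβ : Tendsto (fun x : ℝ => ((2 * x * b x : ℝ) : EReal)) atTop (𝓝 β))
    (hβθ : (θ : EReal) < β) :
    ∀ᶠ n in atTop, AMSE3 n < AMSE1 n ∧ AMSE1 n < AMSE2 n :=
  amse_comparison_positive_bias_large_beta_general θ hθpos b k hk hC2 T1 T2 T3 a1 a2 a3 hT1 hT2 hT3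
    ha1 ha2 ha3 AMSE1 AMSE2 AMSE3 hAMSE1 hAMSE2 hAMSE3 hbpos β hβ hβθ
end
end

section
/- For all ρ ≤ 0 and every positive integer q, ∫_0^∞ K_ρ(1 + x/t)^q e^{−x} dx ∼ q!/t^q as t → ∞, i.e. t^q·∫_0^∞ K_ρ(1 + x/t)^q e^{−x} dx → q! as t → ∞. -/
open MeasureTheory ProbabilityTheory Filter Real Topology

noncomputable section

/-! Since `K_ρ(1) = 0` and `K_ρ'(1) = 1`, the rescaled values `t K_ρ(1 + x/t)` tend to `x` as
`t → ∞`. For `ρ ≤ 0` the integrand `u^(ρ-1)` is at most `1` on `[1, λ]`, so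
`0 ≤ t K_ρ(1 + x/t) ≤ x`, and dominated convergence with majorant `x^q e^(-x)` gives
`t^q ∫ K_ρ(1 + x/t)^q e^(-x) dx → ∫ x^q e^(-x) dx = Γ(q + 1) = q!`. -/

lemma Krho_one (ρ : ℝ) : Krho ρ 1 = 0 := intervalIntegral.integral_same

lemma hasDerivAt_Krho (ρ : ℝ) {l : ℝ} (hl : 0 < l) : HasDerivAt (Krho ρ) (l ^ (ρ - 1)) l := by
  have hcont : ContinuousOn (fun u : ℝ => u ^ (ρ - 1)) (Set.Ioi 0) :=
    continuousOn_id.rpow_const fun u hu => Or.inl (ne_of_gt hu)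
  have hsub : Set.uIcc 1 l ⊆ Set.Ioi 0 := fun u hu =>
    lt_of_lt_of_le (lt_min one_pos hl) hu.1
  exact intervalIntegral.integral_hasDerivAt_right (hcont.mono hsub).intervalIntegrable
    (hcont.stronglyMeasurableAtFilter isOpen_Ioi l hl) (hcont.continuousAt (Ioi_mem_nhds hl))

lemma continuousOn_Krho (ρ : ℝ) : ContinuousOn (Krho ρ) (Set.Ioi 0) := fun _ hl =>
  (hasDerivAt_Krho ρ hl).continuousAt.continuousWithinAt

lemma Krho_nonneg (ρ : ℝ) {l : ℝ} (hl : 1 ≤ l) : 0 ≤ Krho ρ l :=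
  intervalIntegral.integral_nonneg hl fun u hu => Real.rpow_nonneg (by linarith [hu.1]) _

lemma Krho_le_sub_one {ρ : ℝ} (hρ : ρ ≤ 0) {l : ℝ} (hl : 1 ≤ l) : Krho ρ l ≤ l - 1 := by
  have hcont : ContinuousOn (fun u : ℝ => u ^ (ρ - 1)) (Set.uIcc 1 l) :=
    continuousOn_id.rpow_const fun u hu =>
      Or.inl (by linarith [(Set.uIcc_of_le hl ▸ hu).1] : u ≠ 0)
  have := intervalIntegral.integral_mono_on hl hcont.intervalIntegrable
    (intervalIntegrable_const (μ := volume) (c := (1 : ℝ)))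
    fun u hu => Real.rpow_le_one_of_one_le_of_nonpos hu.1 (by linarith)
  simpa [Krho] using this

lemma tendsto_mul_Krho_one_add_div (ρ x : ℝ) :
    Tendsto (fun t => t * Krho ρ (1 + x / t)) atTop (𝓝 x) := by
  rcases eq_or_ne x 0 with rfl | hx
  · simp [Krho_one]
  have hslope := hasDerivAt_iff_tendsto_slope_zero.1 (hasDerivAt_Krho ρ one_pos)
  have hh : Tendsto (fun t : ℝ => x / t) atTop (𝓝[≠] 0) :=
    tendsto_nhdsWithin_iff.2 ⟨tendsto_const_nhds.div_atTop tendsto_id,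
      (eventually_gt_atTop 0).mono fun t ht => div_ne_zero hx ht.ne'⟩
  have hlim := (hslope.comp hh).const_mul x
  rw [Real.one_rpow, mul_one] at hlim
  refine hlim.congr' ((eventually_gt_atTop 0).mono fun t ht => ?_)
  simp only [Function.comp_apply, smul_eq_mul, Krho_one, sub_zero, inv_div]
  field_simp

lemma mul_Krho_one_add_div_mem_Icc {ρ : ℝ} (hρ : ρ ≤ 0) {t x : ℝ} (ht : 0 < t) (hx : 0 ≤ x) :
    t * Krho ρ (1 + x / t) ∈ Set.Icc 0 x := by
  have hl : 1 ≤ 1 + x / t := le_add_of_nonneg_right (div_nonneg hx ht.le)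
  refine ⟨mul_nonneg ht.le (Krho_nonneg ρ hl), ?_⟩
  calc t * Krho ρ (1 + x / t) ≤ t * (1 + x / t - 1) :=
        mul_le_mul_of_nonneg_left (Krho_le_sub_one hρ hl) ht.le
    _ = x := by field_simp; ring

lemma integrableOn_pow_mul_exp_neg (q : ℕ) :
    IntegrableOn (fun x : ℝ => x ^ q * Real.exp (-x)) (Set.Ioi 0) := by
  have := Real.GammaIntegral_convergent (Nat.cast_add_one_pos q)
  simp only [add_sub_cancel_right, Real.rpow_natCast] at this
  simpa only [mul_comm] using this

lemma integral_pow_mul_exp_neg (q : ℕ) :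
    ∫ x in Set.Ioi (0:ℝ), x ^ q * Real.exp (-x) = q.factorial := by
  have := Real.Gamma_eq_integral (Nat.cast_add_one_pos q)
  simp only [Real.Gamma_nat_eq_factorial, add_sub_cancel_right, Real.rpow_natCast] at this
  simp_rw [this, mul_comm]

lemma tendsto_integral_mul_Krho_pow_mul_exp_neg {ρ : ℝ} (hρ : ρ ≤ 0) (q : ℕ) :
    Tendsto (fun t => ∫ x in Set.Ioi (0:ℝ), (t * Krho ρ (1 + x / t)) ^ q * Real.exp (-x))
      atTop (𝓝 q.factorial) := by
  rw [← integral_pow_mul_exp_neg]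
  refine tendsto_integral_filter_of_dominated_convergence _ ?meas ?bound
    (integrableOn_pow_mul_exp_neg q) ?lim
  case meas =>
    filter_upwards [eventually_gt_atTop 0] with t ht
    have hmaps : Set.MapsTo (fun x : ℝ => 1 + x / t) (Set.Ioi 0) (Set.Ioi 0) := fun x hx => by
      have := div_pos hx ht
      simp only [Set.mem_Ioi]
      linarith
    refine ContinuousOn.aestronglyMeasurable ?_ measurableSet_Ioi
    exact ((continuousOn_const.mul ((continuousOn_Krho ρ).comp (by fun_prop) hmaps)).pow q).mul
      (by fun_prop)
  case bound =>
    filter_upwards [eventually_gt_atTop 0] with t ht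
    filter_upwards [self_mem_ae_restrict measurableSet_Ioi] with x hx
    obtain ⟨h0, hle⟩ := mul_Krho_one_add_div_mem_Icc hρ ht (le_of_lt hx)
    rw [Real.norm_of_nonneg (by positivity)]
    gcongr
  case lim =>
    exact ae_of_all _ fun x => ((tendsto_mul_Krho_one_add_div ρ x).pow q).mul_const _

theorem Krho_moment_asymptotics_general
    (ρ : ℝ) (hρ : ρ ≤ 0) (q : ℕ) :
    Tendsto (fun t : ℝ =>
        t ^ q * ∫ x in Set.Ioi (0:ℝ), (Krho ρ (1 + x / t)) ^ q * Real.exp (-x))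
      atTop (𝓝 (q.factorial : ℝ)) := by
  refine (tendsto_integral_mul_Krho_pow_mul_exp_neg hρ q).congr fun t => ?_
  rw [← integral_const_mul]
  simp_rw [mul_pow, mul_assoc]

theorem Krho_moment_asymptotics
    (ρ : ℝ) (hρ : ρ ≤ 0) (q : ℕ) (hq : 0 < q) :
    Tendsto (fun t : ℝ =>
        t ^ q * ∫ x in Set.Ioi (0:ℝ), (Krho ρ (1 + x / t)) ^ q * Real.exp (-x))
      atTop (𝓝 (q.factorial : ℝ)) :=
  Krho_moment_asymptotics_general ρ hρ q
end
end

section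
/- Let k_n → ∞ and k_n/n → 0, and define T_n^{(2)} = (1/k_n)·Σ_{i=1}^{k_n} log(1 − log(i/k_n)/log(n/k_n)) and a_n^{(2)} = μ_0(log(n/k_n))/T_n^{(2)} − 1. Then (i) T_n^{(2)}·log(n/k_n) → 1; and (ii) if moreover log(k_n)/log(n) → 0, then a_n^{(2)} ∼ log(k_n)/(2k_n), i.e. a_n^{(2)}·2k_n/log(k_n) → 1. -/
/-!
With `t = log (n/k)` and `b_i = log (k/i)`, the quantity `t T_n^{(2)}` is the mean of
`x ↦ t log (1 + x/t) = x + ψ_t(x)` over the points `b_i`, while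
`t μ_0(t) = 1 + ∫_0^∞ ψ_t(x) e^{-x} dx`. The `b_i` are quantiles of `Exp(1)`, so a mean over them
is a Riemann sum of `∫ g(x) e^{-x} dx`, accurate up to `(g(log k) - g(0))/k` for monotone `g`.
As `ψ_t` is antitone with `-x²/t ≤ ψ_t(x) ≤ 0`, the `ψ`-mean is `O(1/t)` and differs from
`∫ ψ_t(x) e^{-x} dx` by `O(log² k/(tk))`. Stirling's formula gives
`(1/k) ∑ b_i = 1 - log k/(2k) + O(1/k)`: this yields the limit in (i) and the leading term
`log k/(2k)` of `a_n^{(2)} = (t μ_0(t) - t T_n^{(2)})/(t T_n^{(2)})` in (ii), where the error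
`O(log² k/(tk))` is negligible because `log k / t → 0`.
-/

open MeasureTheory ProbabilityTheory Filter Real Topology

noncomputable section

open Set

def psi (t x : ℝ) : ℝ := t * log (1 + x / t) - x

/-- A Riemann sum for `∫_0^∞ g(x) e^{-x} dx`: `log (k / i)` is the `1 - i/k` quantile
of `Exp(1)`. -/
def expQuantileMean (g : ℝ → ℝ) (k : ℕ) : ℝ := (∑ i ∈ Finset.Icc 1 k, g (log k - log i)) / k

section Psi

variable {t x : ℝ}

lemma sub_sq_le_log_one_add {y : ℝ} (hy : 0 ≤ y) : y - y ^ 2 ≤ log (1 + y) := by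
  have h := one_sub_inv_le_log_of_pos (by positivity : 0 < 1 + y)
  have : y - y ^ 2 ≤ 1 - (1 + y)⁻¹ := by
    rw [le_sub_iff_add_le, ← le_sub_iff_add_le', inv_le_iff_one_le_mul₀ (by positivity)]
    nlinarith [pow_nonneg hy 3]
  linarith

@[simp]
lemma psi_zero_right (t : ℝ) : psi t 0 = 0 := by simp [psi]

lemma psi_nonpos (ht : 0 < t) (hx : 0 ≤ x) : psi t x ≤ 0 := by
  have h : t * log (1 + x / t) ≤ t * (x / t) := by
    gcongr
    linarith [log_le_sub_one_of_pos (by positivity : 0 < 1 + x / t)]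
  rw [mul_div_cancel₀ x ht.ne'] at h
  rw [psi]
  linarith

lemma abs_psi_le (ht : 0 < t) (hx : 0 ≤ x) : |psi t x| ≤ x ^ 2 / t := by
  have h : t * (x / t - (x / t) ^ 2) ≤ t * log (1 + x / t) := by
    gcongr; exact sub_sq_le_log_one_add (by positivity)
  have he : t * (x / t - (x / t) ^ 2) = x - x ^ 2 / t := by field_simp
  rw [abs_of_nonpos (psi_nonpos ht hx), psi]
  linarith

lemma antitoneOn_psi (ht : 0 < t) : AntitoneOn (psi t) (Ici 0) := by
  intro x (hx : 0 ≤ x) y (hy : 0 ≤ y) hxy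
  have hlog : log (1 + y / t) - log (1 + x / t) ≤ (y - x) / (t + x) := by
    rw [← log_div (by positivity) (by positivity)]
    convert log_le_sub_one_of_pos (by positivity : 0 < (1 + y / t) / (1 + x / t)) using 1
    field_simp
    ring
  have : t * ((y - x) / (t + x)) ≤ y - x := by
    rw [mul_div_assoc', div_le_iff₀ (by positivity)]
    nlinarith
  simp only [psi]
  nlinarith

lemma continuousOn_psi (ht : 0 < t) : ContinuousOn (psi t) (Ici 0) := by
  refine ContinuousOn.sub (continuousOn_const.mul (ContinuousOn.log (by fun_prop) ?_))
    continuousOn_id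
  intro x (hx : 0 ≤ x)
  positivity

end Psi

section ExpIntegrals

lemma hasDerivAt_exp_neg (x : ℝ) : HasDerivAt (fun x => exp (-x)) (-exp (-x)) x := by
  simpa using (hasDerivAt_neg x).exp

lemma hasDerivAt_neg_add_one_mul_exp_neg (x : ℝ) :
    HasDerivAt (fun x => -(x + 1) * exp (-x)) (x * exp (-x)) x := by
  have h : HasDerivAt (fun x : ℝ => -(x + 1)) (-1) x := ((hasDerivAt_id x).add_const 1).neg
  exact (h.mul (hasDerivAt_exp_neg x)).congr_deriv (by ring)

lemma hasDerivAt_neg_sq_add_mul_exp_neg (x : ℝ) :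
    HasDerivAt (fun x => -(x ^ 2 + 2 * x + 2) * exp (-x)) (x ^ 2 * exp (-x)) x := by
  have h : HasDerivAt (fun x : ℝ => -(x ^ 2 + 2 * x + 2)) (-(2 * x + 2)) x :=
    ((((hasDerivAt_pow 2 x).add ((hasDerivAt_id x).const_mul 2)).add_const 2).neg).congr_deriv
      (by norm_num)
  exact (h.mul (hasDerivAt_exp_neg x)).congr_deriv (by ring)

lemma tendsto_neg_add_one_mul_exp_neg :
    Tendsto (fun x => -(x + 1) * exp (-x)) atTop (𝓝 0) := by
  have := ((tendsto_pow_mul_exp_neg_atTop_nhds_zero 1).add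
    (tendsto_pow_mul_exp_neg_atTop_nhds_zero 0)).neg
  simpa [add_mul] using this

lemma tendsto_neg_sq_add_mul_exp_neg :
    Tendsto (fun x => -(x ^ 2 + 2 * x + 2) * exp (-x)) atTop (𝓝 0) := by
  have := ((tendsto_pow_mul_exp_neg_atTop_nhds_zero 2).add
    (((tendsto_pow_mul_exp_neg_atTop_nhds_zero 1).const_mul 2).add
      ((tendsto_pow_mul_exp_neg_atTop_nhds_zero 0).const_mul 2))).neg
  simpa [add_mul, mul_assoc, add_assoc] using this

lemma integrableOn_Ioi_mul_exp_neg : IntegrableOn (fun x => x * exp (-x)) (Ioi 0) :=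
  integrableOn_Ioi_deriv_of_nonneg' (fun x _ => hasDerivAt_neg_add_one_mul_exp_neg x)
    (fun x (hx : 0 < x) => by positivity) tendsto_neg_add_one_mul_exp_neg

lemma integral_Ioi_zero_mul_exp_neg : ∫ x in Ioi 0, x * exp (-x) = 1 := by
  rw [integral_Ioi_of_hasDerivAt_of_nonneg' (fun x _ => hasDerivAt_neg_add_one_mul_exp_neg x)
    (fun x (hx : 0 < x) => by positivity) tendsto_neg_add_one_mul_exp_neg]
  simp

lemma integrableOn_Ioi_sq_mul_exp_neg (a : ℝ) :
    IntegrableOn (fun x => x ^ 2 * exp (-x)) (Ioi a) :=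
  integrableOn_Ioi_deriv_of_nonneg' (fun x _ => hasDerivAt_neg_sq_add_mul_exp_neg x)
    (fun x _ => by positivity) tendsto_neg_sq_add_mul_exp_neg

lemma integral_Ioi_sq_mul_exp_neg (a : ℝ) :
    ∫ x in Ioi a, x ^ 2 * exp (-x) = (a ^ 2 + 2 * a + 2) * exp (-a) := by
  rw [integral_Ioi_of_hasDerivAt_of_nonneg' (fun x _ => hasDerivAt_neg_sq_add_mul_exp_neg x)
    (fun x _ => by positivity) tendsto_neg_sq_add_mul_exp_neg]
  ring

end ExpIntegrals

section PsiIntegrals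

variable {t : ℝ}

lemma norm_psi_mul_exp_neg_le (ht : 0 < t) {x : ℝ} (hx : 0 ≤ x) :
    ‖psi t x * exp (-x)‖ ≤ x ^ 2 * exp (-x) / t := by
  rw [norm_mul, norm_of_nonneg (exp_pos _).le, mul_div_right_comm]
  exact mul_le_mul_of_nonneg_right (abs_psi_le ht hx) (exp_pos _).le

lemma integrableOn_psi_mul_exp_neg (ht : 0 < t) {a : ℝ} (ha : 0 ≤ a) :
    IntegrableOn (fun x => psi t x * exp (-x)) (Ioi a) := by
  refine ((integrableOn_Ioi_sq_mul_exp_neg a).div_const t).mono' ?_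
    (ae_restrict_of_forall_mem measurableSet_Ioi fun x (hx : a < x) =>
      norm_psi_mul_exp_neg_le ht (ha.trans hx.le))
  exact (((continuousOn_psi ht).mono fun x (hx : a < x) => ha.trans hx.le).mul
    (by fun_prop)).aestronglyMeasurable measurableSet_Ioi

lemma abs_integral_Ioi_psi_mul_exp_neg_le (ht : 0 < t) {a : ℝ} (ha : 0 ≤ a) :
    |∫ x in Ioi a, psi t x * exp (-x)| ≤ (a ^ 2 + 2 * a + 2) * exp (-a) / t := by
  rw [← integral_Ioi_sq_mul_exp_neg, ← integral_div]
  exact norm_integral_le_of_norm_le ((integrableOn_Ioi_sq_mul_exp_neg a).div_const t)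
    (ae_restrict_of_forall_mem measurableSet_Ioi fun x (hx : a < x) =>
      norm_psi_mul_exp_neg_le ht (ha.trans hx.le))

lemma Krho_zero {lam : ℝ} (h : 0 < lam) : Krho 0 lam = log lam := by
  have h0 : (0 : ℝ) ∉ uIcc 1 lam := fun h0 => (lt_min one_pos h).not_ge h0.1
  rw [Krho, zero_sub, intervalIntegral.integral_congr (g := fun u => u⁻¹)
    (fun u _ => rpow_neg_one u), integral_inv h0, div_one]

lemma mul_muRho_zero (ht : 0 < t) :
    t * muRho 0 t = 1 + ∫ x in Ioi 0, psi t x * exp (-x) := by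
  have hμ : t * muRho 0 t = ∫ x in Ioi 0, (x * exp (-x) + psi t x * exp (-x)) := by
    rw [muRho, ← integral_const_mul]
    refine setIntegral_congr_fun measurableSet_Ioi fun x (hx : 0 < x) => ?_
    simp only [Krho_zero (by positivity : 0 < 1 + x / t), psi]
    ring
  rw [hμ, integral_add integrableOn_Ioi_mul_exp_neg (integrableOn_psi_mul_exp_neg ht le_rfl),
    integral_Ioi_zero_mul_exp_neg]

end PsiIntegrals

section RiemannSum

variable {g : ℝ → ℝ} {k : ℕ}

lemma log_sub_log_mem_Icc {a u : ℝ} (hu : 1 ≤ u) (hua : u ≤ a) :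
    log a - log u ∈ Icc 0 (log a) :=
  ⟨sub_nonneg.2 (log_le_log (by linarith) hua), sub_le_self _ (log_nonneg hu)⟩

lemma antitoneOn_comp_log_sub {a : ℝ} (hg : MonotoneOn g (Icc 0 (log a))) :
    AntitoneOn (fun u => g (log a - log u)) (Icc 1 a) := fun u hu v hv huv =>
  hg (log_sub_log_mem_Icc hv.1 hv.2) (log_sub_log_mem_Icc hu.1 hu.2)
    (sub_le_sub_left (log_le_log (by linarith [hu.1]) huv) _)

/-- The substitution `u = k e^{-x}`. -/
lemma integral_mul_exp_neg_eq (hk : k ≠ 0) :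
    ∫ x in 0..log k, g x * exp (-x) = (∫ u in 1..k, g (log k - log u)) / k := by
  have hk0 : (0 : ℝ) < k := by positivity
  have hsub := intervalIntegral.integral_comp_mul_deriv_of_deriv_nonpos
    (f := fun x => k * exp (-x)) (f' := fun x => -(k * exp (-x)))
    (g := fun u => g (log k - log u)) (a := 0) (b := log k) (by fun_prop)
    (fun x _ => by simpa using (hasDerivAt_exp_neg x).const_mul (k : ℝ))
    (fun x _ => by simp only [Left.neg_nonpos_iff]; positivity)
  have hcomp (x : ℝ) : log k - log (k * exp (-x)) = x := by
    rw [log_mul hk0.ne' (exp_pos _).ne', log_exp]; ring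
  have hL : (k : ℝ) * exp (-log k) = 1 := by rw [exp_neg, exp_log hk0, mul_inv_cancel₀ hk0.ne']
  simp only [Function.comp_def, hcomp, neg_zero, exp_zero, mul_one, hL, mul_neg,
    intervalIntegral.integral_neg, intervalIntegral.integral_symm 1] at hsub
  rw [eq_div_iff hk0.ne', ← neg_inj.1 hsub, ← intervalIntegral.integral_mul_const]
  congr 1 with x
  ring

lemma sum_Icc_eq_sum_Ico_add {M : Type*} [AddCommMonoid M] (f : ℕ → M) {a b : ℕ}
    (hab : a ≤ b) :
    ∑ i ∈ Finset.Icc a b, f i = ∑ i ∈ Finset.Ico a b, f i + f b := by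
  rw [← Finset.Ico_add_one_right_eq_Icc, Finset.sum_Ico_succ_top hab]

lemma sum_Icc_eq_add_sum_Ico {M : Type*} [AddCommMonoid M] (f : ℕ → M) {a b : ℕ}
    (hab : a ≤ b) :
    ∑ i ∈ Finset.Icc a b, f i = f a + ∑ i ∈ Finset.Ico a b, f (i + 1) := by
  rw [← Finset.Ico_add_one_right_eq_Icc, Finset.sum_eq_sum_Ico_succ_bot (by omega),
    Finset.sum_Ico_add']

lemma expQuantileMean_sub_le_integral (hk : 1 ≤ k) (hg : MonotoneOn g (Icc 0 (log k))) :
    expQuantileMean g k - g (log k) / k ≤ ∫ x in 0..log k, g x * exp (-x) := by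
  have hk0 : (0 : ℝ) < k := by positivity
  have h := AntitoneOn.sum_le_integral_Ico hk (by simpa using antitoneOn_comp_log_sub hg)
  rw [integral_mul_exp_neg_eq (by omega), expQuantileMean, ← sub_div,
    div_le_div_iff_of_pos_right hk0, sum_Icc_eq_add_sum_Ico _ hk]
  simpa using h

lemma integral_le_expQuantileMean_sub (hk : 1 ≤ k) (hg : MonotoneOn g (Icc 0 (log k))) :
    ∫ x in 0..log k, g x * exp (-x) ≤ expQuantileMean g k - g 0 / k := by
  have hk0 : (0 : ℝ) < k := by positivity
  have h := AntitoneOn.integral_le_sum_Ico hk (by simpa using antitoneOn_comp_log_sub hg)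
  rw [integral_mul_exp_neg_eq (by omega), expQuantileMean, ← sub_div,
    div_le_div_iff_of_pos_right hk0, sum_Icc_eq_sum_Ico_add _ hk]
  simpa using h

end RiemannSum

section QuantileMeanBounds

variable {k : ℕ} {t : ℝ}

lemma expQuantileMean_neg (g : ℝ → ℝ) (k : ℕ) :
    expQuantileMean (fun x => -g x) k = -expQuantileMean g k := by
  simp [expQuantileMean, neg_div]

lemma integral_sq_mul_exp_neg_le_two {a : ℝ} (ha : 0 ≤ a) :
    ∫ x in 0..a, x ^ 2 * exp (-x) ≤ 2 := by
  rw [intervalIntegral.integral_of_le ha]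
  calc ∫ x in Ioc 0 a, x ^ 2 * exp (-x)
      ≤ ∫ x in Ioi 0, x ^ 2 * exp (-x) :=
        setIntegral_mono_set (integrableOn_Ioi_sq_mul_exp_neg 0)
          (.of_forall fun x => by positivity) Ioc_subset_Ioi_self.eventuallyLE
    _ = 2 := by simp [integral_Ioi_sq_mul_exp_neg]

lemma expQuantileMean_sq_le (hk : 1 ≤ k) : expQuantileMean (· ^ 2) k ≤ 2 + log k ^ 2 / k := by
  have h := expQuantileMean_sub_le_integral hk fun x hx y _ hxy => pow_le_pow_left₀ hx.1 hxy 2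
  linarith [integral_sq_mul_exp_neg_le_two (log_nonneg (Nat.one_le_cast.2 hk))]

lemma abs_expQuantileMean_psi_le (hk : 1 ≤ k) (ht : 0 < t) :
    |expQuantileMean (psi t) k| ≤ (2 + log k ^ 2 / k) / t := by
  have hk0 : (0 : ℝ) < k := by positivity
  calc |expQuantileMean (psi t) k|
      ≤ (∑ i ∈ Finset.Icc 1 k, (log k - log i) ^ 2 / t) / k := by
        rw [expQuantileMean, abs_div, abs_of_pos hk0]
        refine div_le_div_of_nonneg_right ((Finset.abs_sum_le_sum_abs _ _).trans
          (Finset.sum_le_sum fun i hi => abs_psi_le ht ?_)) hk0.le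
        rw [Finset.mem_Icc] at hi
        exact (log_sub_log_mem_Icc (Nat.one_le_cast.2 hi.1) (Nat.cast_le.2 hi.2)).1
    _ = expQuantileMean (· ^ 2) k / t := by
        rw [expQuantileMean, ← Finset.sum_div, div_right_comm]
    _ ≤ (2 + log k ^ 2 / k) / t := by gcongr; exact expQuantileMean_sq_le hk

lemma abs_integral_psi_sub_expQuantileMean_le (hk : 1 ≤ k) (ht : 0 < t) :
    |(∫ x in Ioi 0, psi t x * exp (-x)) - expQuantileMean (psi t) k|
      ≤ (2 * log k ^ 2 + 2 * log k + 2) / (t * k) := by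
  have hk0 : (0 : ℝ) < k := by positivity
  have hL : 0 ≤ log (k : ℝ) := log_nonneg (Nat.one_le_cast.2 hk)
  have hmono : MonotoneOn (fun x => -psi t x) (Icc 0 (log k)) := fun x hx y hy hxy =>
    neg_le_neg (antitoneOn_psi ht hx.1 hy.1 hxy)
  -- As `ψ_t` is antitone with `ψ_t(0) = 0`, its integral against `e^{-x}` over `[0, log k]`
  -- exceeds its Riemann sum by at most `-ψ_t(log k)/k`.
  have hlow := expQuantileMean_sub_le_integral hk hmono
  have hup := integral_le_expQuantileMean_sub hk hmono
  simp only [expQuantileMean_neg, psi_zero_right, neg_zero, zero_div, sub_zero, neg_mul,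
    intervalIntegral.integral_neg] at hlow hup
  have hpsiL : -psi t (log k) / k ≤ log k ^ 2 / (t * k) := by
    rw [← div_div]
    gcongr
    exact (neg_le_abs _).trans (abs_psi_le ht hL)
  have htail := abs_integral_Ioi_psi_mul_exp_neg_le ht hL
  rw [exp_neg, exp_log hk0, ← div_eq_mul_inv, div_div, mul_comm (k : ℝ)] at htail
  rw [← intervalIntegral.integral_interval_add_Ioi (integrableOn_psi_mul_exp_neg ht le_rfl)
    (integrableOn_psi_mul_exp_neg ht hL)]
  have hsplit : (2 * log k ^ 2 + 2 * log k + 2) / (t * k)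
      = log k ^ 2 / (t * k) + (log k ^ 2 + 2 * log k + 2) / (t * k) := by
    ring
  rw [hsplit, abs_le]
  constructor <;> linarith [abs_le.1 htail]

end QuantileMeanBounds

section Stirling

open Nat in
lemma sum_Icc_log_eq_log_factorial (k : ℕ) :
    ∑ i ∈ Finset.Icc 1 k, log (i : ℝ) = log (k ! : ℝ) := by
  induction k with
  | zero => simp
  | succ m ih =>
    rw [Finset.sum_Icc_succ_top (by omega), ih, factorial_succ, cast_mul,
      log_mul (by positivity) (by positivity), add_comm]

lemma expQuantileMean_id_eq {k : ℕ} (hk : k ≠ 0) :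
    expQuantileMean id k = 1 - (log (Stirling.stirlingSeq k) + log (2 * k) / 2) / k := by
  have hk0 : (0 : ℝ) < k := by positivity
  rw [expQuantileMean, Stirling.log_stirlingSeq_formula, log_div hk0.ne' (exp_pos 1).ne', log_exp]
  simp only [id, Finset.sum_sub_distrib, Finset.sum_const, Nat.card_Icc, add_tsub_cancel_right,
    nsmul_eq_mul, sum_Icc_log_eq_log_factorial]
  field_simp
  ring

lemma tendsto_log_pow_div_natCast (m : ℕ) :
    Tendsto (fun k : ℕ => log k ^ m / k) atTop (𝓝 0) := by
  have := (tendsto_pow_log_div_mul_add_atTop 1 0 m one_ne_zero).comp tendsto_natCast_atTop_atTop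
  simpa [Function.comp_def] using this

lemma tendsto_one_sub_expQuantileMean_id_mul :
    Tendsto (fun k : ℕ => (1 - expQuantileMean id k) * (2 * k) / log k) atTop (𝓝 1) := by
  have hlogk : Tendsto (fun k : ℕ => log (k : ℝ)) atTop atTop :=
    tendsto_log_atTop.comp tendsto_natCast_atTop_atTop
  have hs : Tendsto (fun k : ℕ => 2 * log (Stirling.stirlingSeq k) + log 2) atTop
      (𝓝 (2 * log √π + log 2)) :=
    (((continuousAt_log (by positivity)).tendsto.comp
      Stirling.tendsto_stirlingSeq_sqrt_pi).const_mul 2).add_const _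
  have := tendsto_const_nhds (x := (1 : ℝ)).add (hs.div_atTop hlogk)
  rw [add_zero] at this
  refine this.congr' ?_
  filter_upwards [hlogk.eventually_gt_atTop 0] with k hk
  have hk0 : (k : ℝ) ≠ 0 := by rintro h; simp [h] at hk
  rw [expQuantileMean_id_eq (by exact_mod_cast hk0), log_mul two_ne_zero hk0]
  field_simp
  ring

lemma tendsto_expQuantileMean_id : Tendsto (expQuantileMean id) atTop (𝓝 1) := by
  have h := tendsto_one_sub_expQuantileMean_id_mul.mul ((tendsto_log_pow_div_natCast 1).div_const 2)
  rw [zero_div, mul_zero] at h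
  have := tendsto_const_nhds (x := (1 : ℝ)).sub h
  rw [sub_zero] at this
  refine this.congr' ?_
  filter_upwards [eventually_gt_atTop 1] with k hk
  have hL : log (k : ℝ) ≠ 0 := (log_pos (by exact_mod_cast hk)).ne'
  have hk0 : (k : ℝ) ≠ 0 := by positivity
  field_simp
  ring

end Stirling

lemma expQuantileMean_id_add_psi (k : ℕ) (t : ℝ) :
    expQuantileMean id k + expQuantileMean (psi t) k
      = 1 / (k : ℝ) * (∑ i ∈ Finset.Icc 1 k, log (1 - log ((i : ℝ) / k) / t)) * t := by
  have hterm : ∀ i ∈ Finset.Icc 1 k,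
      id (log k - log i) + psi t (log k - log i) = t * log (1 - log ((i : ℝ) / k) / t) := by
    intro i hi
    rw [Finset.mem_Icc] at hi
    have hi0 : (i : ℝ) ≠ 0 := by have := hi.1; positivity
    have hk0 : (k : ℝ) ≠ 0 := by have := hi.1.trans hi.2; positivity
    rw [log_div hi0 hk0, psi, id]
    ring_nf
  rw [expQuantileMean, expQuantileMean, ← add_div, ← Finset.sum_add_distrib,
    Finset.sum_congr rfl hterm, ← Finset.mul_sum]
  ring

section Sequences

variable {k : ℕ → ℕ} {t : ℕ → ℝ}

lemma tendsto_log_div_atTop_s14 (hk : Tendsto (fun n => (k n : ℝ)) atTop atTop)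
    (hkn : Tendsto (fun n => (k n : ℝ) / n) atTop (𝓝 0)) :
    Tendsto (fun n : ℕ => log ((n : ℝ) / k n)) atTop atTop := by
  have hpos : ∀ᶠ n in atTop, (k n : ℝ) / n ∈ Ioi 0 := by
    filter_upwards [hk.eventually_gt_atTop 0, eventually_gt_atTop 0] with n hkn hn
    exact div_pos hkn (Nat.cast_pos.2 hn)
  have := (tendsto_nhdsWithin_iff.2 ⟨hkn, hpos⟩).inv_tendsto_nhdsGT_zero
  simpa only [Function.comp_def, Pi.inv_apply, inv_div] using tendsto_log_atTop.comp this

lemma tendsto_log_div_log_div_of_tendsto (hk : ∀ᶠ n in atTop, k n ≠ 0)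
    (hlog : Tendsto (fun n : ℕ => log (k n) / log n) atTop (𝓝 0)) :
    Tendsto (fun n : ℕ => log (k n) / log ((n : ℝ) / k n)) atTop (𝓝 0) := by
  have := hlog.div (tendsto_const_nhds (x := (1 : ℝ)).sub hlog) (by norm_num)
  rw [zero_div] at this
  refine this.congr' ?_
  filter_upwards [hk, eventually_gt_atTop 1] with n hkn hn
  have hn : log (n : ℝ) ≠ 0 := (log_pos (by exact_mod_cast hn)).ne'
  rw [Pi.div_apply, log_div (by positivity) (by positivity), one_sub_div hn,
    div_div_div_cancel_right₀ hn]

lemma tendsto_expQuantileMean_psi (hk : Tendsto k atTop atTop) (ht : Tendsto t atTop atTop) :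
    Tendsto (fun n => expQuantileMean (psi (t n)) (k n)) atTop (𝓝 0) := by
  have hbound := (tendsto_const_nhds (x := (2 : ℝ)).add
    ((tendsto_log_pow_div_natCast 2).comp hk)).div_atTop ht
  refine squeeze_zero_norm' ?_ hbound
  filter_upwards [hk.eventually_ge_atTop 1, ht.eventually_gt_atTop 0] with n hkn htn
  exact abs_expQuantileMean_psi_le hkn htn

lemma tendsto_integral_psi_sub_expQuantileMean_mul (hk : Tendsto k atTop atTop)
    (ht : Tendsto t atTop atTop) (hLt : Tendsto (fun n => log (k n) / t n) atTop (𝓝 0)) :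
    Tendsto (fun n => ((∫ x in Ioi 0, psi (t n) x * exp (-x)) - expQuantileMean (psi (t n)) (k n))
      * (2 * k n) / log (k n)) atTop (𝓝 0) := by
  have hbound := (hLt.const_mul 4).add (tendsto_const_nhds (x := (8 : ℝ)).div_atTop ht)
  rw [mul_zero, add_zero] at hbound
  refine squeeze_zero_norm' ?_ hbound
  have hL := (tendsto_log_atTop.comp (tendsto_natCast_atTop_atTop.comp hk)).eventually_ge_atTop 1
  filter_upwards [hk.eventually_ge_atTop 1, ht.eventually_gt_atTop 0, hL] with n hkn htn hLn
  simp only [Function.comp_apply] at hLn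
  have hR := abs_integral_psi_sub_expQuantileMean_le hkn htn
  rw [norm_div, norm_mul, norm_of_nonneg (by positivity : (0 : ℝ) ≤ 2 * k n),
    norm_of_nonneg (by positivity : 0 ≤ log (k n : ℝ)), Real.norm_eq_abs]
  calc |(∫ x in Ioi 0, psi (t n) x * exp (-x)) - expQuantileMean (psi (t n)) (k n)|
        * (2 * k n) / log (k n)
      ≤ (2 * log (k n) ^ 2 + 2 * log (k n) + 2) / (t n * k n) * (2 * k n) / log (k n) := by
        gcongr
    _ = 4 * (log (k n) / t n) + (4 + 4 / log (k n)) / t n := by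
        field_simp
        ring
    _ ≤ 4 * (log (k n) / t n) + 8 / t n := by
        gcongr
        linarith [div_le_self (by norm_num : (0 : ℝ) ≤ 4) hLn]

end Sequences

lemma muRho_zero_div_sub_one {k : ℕ} {t T : ℝ} (ht : 0 < t) (hT : T ≠ 0)
    (hTt : T * t = expQuantileMean id k + expQuantileMean (psi t) k) :
    muRho 0 t / T - 1 = ((1 - expQuantileMean id k)
      + ((∫ x in Ioi 0, psi t x * exp (-x)) - expQuantileMean (psi t) k)) / (T * t) := by
  rw [div_sub_one hT, ← mul_div_mul_right _ _ ht.ne', sub_mul, mul_comm (muRho 0 t) t,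
    mul_muRho_zero ht, hTt]
  ring

theorem T_two_and_a_two_asymptotics_general
    (k : ℕ → ℕ)
    (hk : Tendsto (fun n => (k n : ℝ)) atTop atTop)
    (hkn : Tendsto (fun n => (k n : ℝ) / n) atTop (𝓝 0))
    (T2 : ℕ → ℝ)
    (hT2 : ∀ n, T2 n = (1 / (k n : ℝ)) * ∑ i ∈ Finset.Icc 1 (k n),
      Real.log (1 - Real.log ((i : ℝ) / (k n : ℝ)) / Real.log ((n : ℝ) / (k n : ℝ))))
    (a2 : ℕ → ℝ)
    (ha2 : ∀ n, a2 n = muRho 0 (Real.log ((n : ℝ) / (k n : ℝ))) / T2 n - 1) :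
    Tendsto (fun n => T2 n * Real.log ((n : ℝ) / (k n : ℝ))) atTop (𝓝 1) ∧
    (Tendsto (fun n : ℕ => Real.log (k n) / Real.log n) atTop (𝓝 0) →
      Tendsto (fun n => a2 n * (2 * (k n : ℝ)) / Real.log (k n)) atTop (𝓝 1)) := by
  set t : ℕ → ℝ := fun n => log ((n : ℝ) / k n)
  have hkN : Tendsto k atTop atTop := tendsto_natCast_atTop_iff.mp hk
  have ht : Tendsto t atTop atTop := tendsto_log_div_atTop_s14 hk hkn
  have hTt (n : ℕ) :
      T2 n * t n = expQuantileMean id (k n) + expQuantileMean (psi (t n)) (k n) := by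
    rw [hT2, expQuantileMean_id_add_psi]
  have hT : Tendsto (fun n => T2 n * t n) atTop (𝓝 1) := by
    simpa [hTt] using (tendsto_expQuantileMean_id.comp hkN).add (tendsto_expQuantileMean_psi hkN ht)
  refine ⟨hT, fun hlog => ?_⟩
  have hLt := tendsto_log_div_log_div_of_tendsto (hkN.eventually_ne_atTop 0) hlog
  have hlim := ((tendsto_one_sub_expQuantileMean_id_mul.comp hkN).add
    (tendsto_integral_psi_sub_expQuantileMean_mul hkN ht hLt)).div hT one_ne_zero
  rw [add_zero, div_one] at hlim
  refine hlim.congr' ?_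
  filter_upwards [ht.eventually_gt_atTop 0, hT.eventually_ne one_ne_zero] with n htn hTn
  simp only [Pi.div_apply, Function.comp_apply]
  rw [ha2, muRho_zero_div_sub_one htn (left_ne_zero_of_mul hTn) (hTt n)]
  ring

theorem T_two_and_a_two_asymptotics
    (k : ℕ → ℕ) (hkbd : ∀ n, 2 ≤ n → 1 ≤ k n ∧ k n < n)
    (hk : Tendsto (fun n => (k n : ℝ)) atTop atTop)
    (hkn : Tendsto (fun n => (k n : ℝ) / n) atTop (𝓝 0))
    (T2 : ℕ → ℝ)
    (hT2 : ∀ n, T2 n = (1 / (k n : ℝ)) * ∑ i ∈ Finset.Icc 1 (k n),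
      Real.log (1 - Real.log ((i : ℝ) / (k n : ℝ)) / Real.log ((n : ℝ) / (k n : ℝ))))
    (a2 : ℕ → ℝ)
    (ha2 : ∀ n, a2 n = muRho 0 (Real.log ((n : ℝ) / (k n : ℝ))) / T2 n - 1) :
    Tendsto (fun n => T2 n * Real.log ((n : ℝ) / (k n : ℝ))) atTop (𝓝 1) ∧
    (Tendsto (fun n : ℕ => Real.log (k n) / Real.log n) atTop (𝓝 0) →
      Tendsto (fun n => a2 n * (2 * (k n : ℝ)) / Real.log (k n)) atTop (𝓝 1)) :=
  T_two_and_a_two_asymptotics_general k hk hkn T2 hT2 a2 ha2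
end
end
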